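/- Let H be a hyperbolic quadric in PG(3,4) and let O be the set of 72 lines of PG(3,4) disjoint from H. Then for every point p and plane P with p ∈ P, the pencil of 5 lines through p contained in P contains either 0 or exactly 2 lines of O. -/

import Mathlib

/-- The underlying 4-dimensional vector space of `PG(3,F)`. -/
abbrev Vv (F : Type) [Field F] : Type := Fin 4 → F

/-- A point of `PG(3,F)`: a 1-dimensional subspace. -/
def IsPoint (F : Type) [Field F] (W : Submodule F (Vv F)) : Prop :=
  Module.finrank F W = 1

/-- A line of `PG(3,F)`: a 2-dimensional subspace. -/
def IsLine (F : Type) [Field F] (W : Submodule F (Vv F)) : Prop :=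
  Module.finrank F W = 2

/-- A plane of `PG(3,F)`: a 3-dimensional subspace. -/
def IsPlane (F : Type) [Field F] (W : Submodule F (Vv F)) : Prop :=
  Module.finrank F W = 3

/-- `Q` is a nondegenerate quadratic form of plus type (Witt index 2) in 4 variables:
up to an invertible linear change of coordinates it is `x₀x₁ + x₂x₃`. -/
def IsHyperbolicForm (F : Type) [Field F] (Q : Vv F → F) : Prop :=
  ∃ e : Vv F ≃ₗ[F] Vv F, ∀ x, Q x = e x 0 * e x 1 + e x 2 * e x 3

/-- A projective subspace lies on the quadric if `Q` vanishes on it. -/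
def OnQuadric (F : Type) [Field F] (Q : Vv F → F) (W : Submodule F (Vv F)) : Prop :=
  ∀ v ∈ W, Q v = 0

/-!
Write `p = ⟨v⟩` and `B` for the polar form of `Q`; the characteristic is 2. If `v` is singular,
every line of the pencil meets the quadric at `v`. If `P ⊆ v^⊥`, every line `⟨v, u⟩` of the pencil
has `B(v, u) = 0`, so `Q(t v + u) = t² Q v + Q u` vanishes at `t = √(Q u / Q v)`. Otherwise
`P ∩ v^⊥` is a line `⟨v, w₂⟩` with `w₂` singular, and for `w₁ ∈ P` with `B(v, w₁) = 1` the other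
four lines of the pencil are `⟨v, w₁ + c w₂⟩`, `c ∈ 𝔽₄`. Such a line misses the quadric iff
`s² + s = T(c) := Q v · (Q w₁ + c B(w₁, w₂))` has no root in `𝔽₄`, i.e. iff `T(c) ∉ {0, 1}`.
If `B(w₁, w₂) ≠ 0`, `T` is a bijection of `𝔽₄` and exactly two lines qualify. If `B(w₁, w₂) = 0`,
all of them lie in the tangent plane `w₂^⊥`, which for a hyperbolic quadric contains a line of the
quadric, and every line of that plane meets it.
-/

open Module Submodule QuadraticMap Function

namespace HyperbolicPencil

section FieldOfOrderFour

variable {F : Type*} [Field F] [Fintype F]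

theorem charP_two_of_card_eq_four (hF : Fintype.card F = 4) : CharP F 2 := by
  refine CharTwo.of_one_ne_zero_of_two_eq_zero one_ne_zero (pow_eq_zero_iff two_ne_zero |>.mp ?_)
  have h4 := FiniteField.cast_card_eq_zero F
  rw [hF] at h4
  linear_combination h4

theorem sq_add_self_sq_eq (hF : Fintype.card F = 4) (s : F) : (s ^ 2 + s) ^ 2 = s ^ 2 + s := by
  have := charP_two_of_card_eq_four hF
  have hs : s ^ 4 = s := by simpa [hF] using FiniteField.pow_card s
  rw [CharTwo.add_sq, ← pow_mul, hs, add_comm]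

theorem ncard_setOf_sq_ne_self_comp (hF : Fintype.card F = 4) {g : F → F} (hg : Injective g) :
    {c | g c ^ 2 ≠ g c}.ncard = 2 := by
  have hset : {c | g c ^ 2 ≠ g c} = g ⁻¹' {0, 1}ᶜ := by
    ext c
    simp only [Set.mem_ofPred_eq, Set.mem_preimage, Set.mem_compl_iff, Set.mem_insert_iff,
      Set.mem_singleton_iff]
    exact not_congr ⟨eq_zero_or_one_of_sq_eq_self, by rintro (h | h) <;> simp [h]⟩
  rw [hset, Set.ncard_preimage_of_injective_subset_range hg
      (by simp [(Finite.injective_iff_surjective.mp hg).range_eq]),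
    Set.ncard_compl, Set.ncard_pair zero_ne_one, Nat.card_eq_fintype_card, hF]

theorem exists_sq_add_self_eq_iff (hF : Fintype.card F = 4) (c : F) :
    (∃ s, s ^ 2 + s = c) ↔ c ^ 2 = c := by
  have := charP_two_of_card_eq_four hF
  refine ⟨fun ⟨s, hs⟩ => hs ▸ sq_add_self_sq_eq hF s, fun hc => ?_⟩
  rcases eq_zero_or_one_of_sq_eq_self hc with rfl | rfl
  · exact ⟨0, by ring⟩
  · obtain ⟨s, hs⟩ : {s : F | s ^ 2 ≠ s}.Nonempty := Set.nonempty_of_ncard_ne_zero <| by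
      rw [(ncard_setOf_sq_ne_self_comp hF injective_id : {s : F | s ^ 2 ≠ s}.ncard = 2)]
      norm_num
    refine ⟨s, (eq_zero_or_one_of_sq_eq_self (sq_add_self_sq_eq hF s)).resolve_left fun h => hs ?_⟩
    linear_combination h - s * CharTwo.two_eq_zero (R := F)

end FieldOfOrderFour

section LinearAlgebra

variable {F V : Type*} [Field F] [AddCommGroup V] [Module F V]

theorem smul_add_ne_zero {v u : V} (hu : u ∉ span F {v}) (a : F) : a • v + u ≠ 0 := fun h =>
  hu <| by
    rw [eq_neg_of_add_eq_zero_right h]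
    exact neg_mem (smul_mem _ _ (mem_span_singleton_self v))

theorem notMem_span_singleton_of_apply (f : Dual F V) {v u : V} (hv : f v = 0) (hu : f u ≠ 0) :
    u ∉ span F {v} := fun h => by
  obtain ⟨a, rfl⟩ := mem_span_singleton.mp h
  simp [hv] at hu

theorem finrank_span_pair_eq_two {v u : V} (hv : v ≠ 0) (hu : u ∉ span F {v}) :
    finrank F (span F {v, u}) = 2 := by
  have h : LinearIndependent F ![v, u] := (LinearIndependent.pair_iff' hv).mpr fun a ha =>
    hu (ha ▸ smul_mem _ _ (mem_span_singleton_self v))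
  rw [← Matrix.range_cons_cons_empty v u ![]]
  simp [finrank_span_eq_card h]

theorem eq_span_pair_of_finrank_eq_two {L : Submodule F V} (hL : finrank F L = 2) {v u : V}
    (hvL : v ∈ L) (huL : u ∈ L) (hv : v ≠ 0) (hu : u ∉ span F {v}) : L = span F {v, u} := by
  have : FiniteDimensional F L := Module.finite_of_finrank_pos (by omega)
  refine (eq_of_le_of_finrank_le (span_le.mpr ?_) ?_).symm
  · rintro x (rfl | rfl) <;> assumption
  · rw [hL, finrank_span_pair_eq_two hv hu]

theorem finrank_inf_ker_add_one [FiniteDimensional F V] {f : Dual F V} {P : Submodule F V}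
    (hP : ¬ P ≤ LinearMap.ker f) : finrank F ↥(P ⊓ LinearMap.ker f) + 1 = finrank F P := by
  have hf : f ≠ 0 := by rintro rfl; exact hP (by simp)
  have hker := Module.Dual.finrank_ker_add_one_of_ne_zero hf
  have hlt : LinearMap.ker f < P ⊔ LinearMap.ker f :=
    lt_of_le_of_ne le_sup_right fun h => hP (h ▸ le_sup_left)
  have := finrank_lt_finrank_of_lt hlt
  have := (P ⊔ LinearMap.ker f).finrank_le
  have := finrank_sup_add_finrank_inf_eq P (LinearMap.ker f)
  omega

variable {f : Dual F V} {v w₁ w₂ : V}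

theorem finrank_span_pair_add_smul (hv : v ≠ 0) (hfv : f v = 0) (hfw₁ : f w₁ = 1)
    (hfw₂ : f w₂ = 0) (c : F) : finrank F (span F {v, w₁ + c • w₂}) = 2 :=
  finrank_span_pair_eq_two hv (notMem_span_singleton_of_apply f hfv (by simp [hfw₁, hfw₂]))

theorem exists_eq_span_pair_add_smul {P : Submodule F V} (hv : v ≠ 0)
    (hK : P ⊓ LinearMap.ker f = span F {v, w₂}) (hw₁ : w₁ ∈ P) (hfw₁ : f w₁ = 1)
    {L : Submodule F V} (hL : finrank F L = 2) (hvL : v ∈ L) (hLP : L ≤ P)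
    (hLf : ¬ L ≤ LinearMap.ker f) : ∃ c : F, L = span F {v, w₁ + c • w₂} := by
  have hvK : v ∈ P ⊓ LinearMap.ker f := hK ▸ subset_span (by simp)
  have hw₂K : w₂ ∈ P ⊓ LinearMap.ker f := hK ▸ subset_span (by simp)
  obtain ⟨u, huL, hfu⟩ := SetLike.not_le_iff_exists.mp hLf
  rw [LinearMap.mem_ker] at hfu
  have hu : (f u)⁻¹ • u - w₁ ∈ P ⊓ LinearMap.ker f :=
    ⟨sub_mem (smul_mem _ _ (hLP huL)) hw₁, by simp [hfu, hfw₁]⟩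
  obtain ⟨s, c, hsc⟩ := mem_span_pair.mp (hK ▸ hu)
  have hmem : w₁ + c • w₂ ∈ L := by
    have : w₁ + c • w₂ = (f u)⁻¹ • u - s • v := by linear_combination (norm := module) hsc
    rw [this]
    exact sub_mem (smul_mem _ _ huL) (smul_mem _ _ hvL)
  exact ⟨c, eq_span_pair_of_finrank_eq_two hL hvL hmem hv
    (notMem_span_singleton_of_apply f hvK.2 (by simp [hfw₁, show f w₂ = 0 from hw₂K.2]))⟩

theorem injective_span_pair_add_smul (hfv : f v = 0) (hfw₁ : f w₁ = 1) (hfw₂ : f w₂ = 0)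
    (hw₂ : w₂ ∉ span F {v}) : Injective fun c : F => span F {v, w₁ + c • w₂} := by
  intro c c' (h : span F {v, w₁ + c • w₂} = span F {v, w₁ + c' • w₂})
  have hm : w₁ + c • w₂ ∈ span F {v, w₁ + c' • w₂} := h ▸ subset_span (by simp)
  obtain ⟨a, b, hab⟩ := mem_span_pair.mp hm
  obtain rfl : b = 1 := by simpa [hfv, hfw₁, hfw₂] using congrArg f hab
  by_contra hne
  have : (c - c') • w₂ = a • v := by linear_combination (norm := module) -hab
  refine hw₂ (mem_span_singleton.mpr ⟨(c - c')⁻¹ * a, ?_⟩)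
  rw [mul_smul, ← this, smul_smul, inv_mul_cancel₀ (sub_ne_zero.mpr hne), one_smul]

end LinearAlgebra

section QuadraticForm

variable {F V : Type*} [Field F] [AddCommGroup V] [Module F V] (Q : QuadraticForm F V)

def IsAnisotropicSubspace (L : Submodule F V) : Prop :=
  ∀ x ∈ L, Q x = 0 → x = 0

def anisotropicPencil (p P : Submodule F V) : Set (Submodule F V) :=
  {L | finrank F L = 2 ∧ p ≤ L ∧ L ≤ P ∧ IsAnisotropicSubspace Q L}

def NoAnisotropicLineInTangentHyperplane : Prop :=
  ∀ w : V, w ≠ 0 → Q w = 0 → ∀ L : Submodule F V, finrank F L = 2 →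
    L ≤ LinearMap.ker (polarBilin Q w) → ¬ IsAnisotropicSubspace Q L

theorem map_smul_add (a : F) (v u : V) :
    Q (a • v + u) = a ^ 2 * Q v + a * polar Q v u + Q u := by
  rw [QuadraticMap.map_add (⇑Q), Q.map_smul, polar_smul_left, smul_eq_mul, smul_eq_mul]
  ring

theorem polarBilin_self_eq_zero [CharP F 2] (x : V) : polarBilin Q x x = 0 := by
  rw [polarBilin_apply_apply, polar_self, two_nsmul, CharTwo.add_self_eq_zero]

theorem not_isAnisotropicSubspace_of_le_ker_polar [Finite F] [CharP F 2] {v : V} (hv : Q v ≠ 0)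
    {L : Submodule F V} (hL : finrank F L = 2) (hvL : v ∈ L)
    (hLv : L ≤ LinearMap.ker (polarBilin Q v)) : ¬ IsAnisotropicSubspace Q L := by
  intro hani
  have hv0 : v ≠ 0 := by rintro rfl; simp at hv
  obtain ⟨u, huL, hu⟩ : ∃ u ∈ L, u ∉ span F {v} := SetLike.not_le_iff_exists.mp fun hle => by
    have : L = span F {v} := le_antisymm hle (span_le.mpr (by simpa using hvL))
    rw [this, finrank_span_singleton hv0] at hL
    omega
  obtain ⟨t, ht⟩ := isSquare_of_charTwo' (Q u / Q v)
  have hvu : polar Q v u = 0 := by simpa using hLv huL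
  refine smul_add_ne_zero hu t (hani _ (add_mem (smul_mem _ _ hvL) huL) ?_)
  rw [map_smul_add, hvu, _root_.sq, ← ht, div_mul_cancel₀ _ hv, mul_zero, add_zero,
    CharTwo.add_self_eq_zero]

theorem isAnisotropicSubspace_span_pair_iff [Fintype F] (hF : Fintype.card F = 4) {v u : V}
    (hv : Q v ≠ 0) (hvu : polar Q v u = 1) :
    IsAnisotropicSubspace Q (span F {v, u}) ↔ (Q v * Q u) ^ 2 ≠ Q v * Q u := by
  have := charP_two_of_card_eq_four hF
  have hu : u ∉ span F {v} :=
    notMem_span_singleton_of_apply (polarBilin Q v) (polarBilin_self_eq_zero Q v)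
      (by simp [hvu])
  rw [← not_iff_not, not_not, ← exists_sq_add_self_eq_iff hF]
  constructor
  · intro h
    simp only [IsAnisotropicSubspace, not_forall] at h
    obtain ⟨x, hx, hQx, hx0⟩ := h
    obtain ⟨a, b, rfl⟩ := mem_span_pair.mp hx
    rw [map_smul_add, Q.map_smul, polar_smul_right, hvu, smul_eq_mul, smul_eq_mul] at hQx
    have hb : b ≠ 0 := by
      rintro rfl
      have : a = 0 := by simpa [hv] using hQx
      simp [this] at hx0
    refine ⟨a * Q v / b, ?_⟩
    field_simp
    linear_combination hQx - b ^ 2 * Q u * CharTwo.two_eq_zero (R := F)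
  · rintro ⟨s, hs⟩ hani
    refine smul_add_ne_zero hu (s / Q v)
      (hani _ (add_mem (smul_mem _ _ (subset_span (by simp))) (subset_span (by simp))) ?_)
    rw [map_smul_add, hvu]
    field_simp
    linear_combination hs + Q v * Q u * CharTwo.two_eq_zero (R := F)

theorem exists_isotropic_eq_span_pair_of_le_ker_polar [Finite F] [CharP F 2] {v : V}
    (hv : Q v ≠ 0) {K : Submodule F V} (hK : finrank F K = 2) (hvK : v ∈ K)
    (hKv : K ≤ LinearMap.ker (polarBilin Q v)) :
    ∃ w, K = span F {v, w} ∧ w ∉ span F {v} ∧ Q w = 0 := by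
  have hv0 : v ≠ 0 := by rintro rfl; simp at hv
  have h := not_isAnisotropicSubspace_of_le_ker_polar Q hv hK hvK hKv
  simp only [IsAnisotropicSubspace, not_forall] at h
  obtain ⟨w, hwK, hQw, hw0⟩ := h
  have hw : w ∉ span F {v} := fun hw => by
    obtain ⟨a, rfl⟩ := mem_span_singleton.mp hw
    have ha : a ≠ 0 := by rintro rfl; simp at hw0
    simp [Q.map_smul, ha, hv] at hQw
  exact ⟨w, eq_span_pair_of_finrank_eq_two hK hvK hwK hv0 hw, hw, hQw⟩

theorem anisotropicPencil_eq_empty_of_le_ker_polar [Finite F] [CharP F 2] {v : V} (hv : Q v ≠ 0)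
    {P : Submodule F V} (hP : P ≤ LinearMap.ker (polarBilin Q v)) :
    anisotropicPencil Q (span F {v}) P = ∅ :=
  Set.eq_empty_of_forall_notMem fun _ ⟨hL, hvL, hLP, hani⟩ =>
    not_isAnisotropicSubspace_of_le_ker_polar Q hv hL (hvL (mem_span_singleton_self v))
      (hLP.trans hP) hani

theorem anisotropicPencil_eq_image [Finite F] [CharP F 2] {v w₁ w₂ : V} {P : Submodule F V}
    (hv : Q v ≠ 0) (hK : P ⊓ LinearMap.ker (polarBilin Q v) = span F {v, w₂}) (hw₁ : w₁ ∈ P)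
    (hvw₁ : polar Q v w₁ = 1) :
    anisotropicPencil Q (span F {v}) P = (fun c : F => span F {v, w₁ + c • w₂}) ''
      {c | IsAnisotropicSubspace Q (span F {v, w₁ + c • w₂})} := by
  have hv0 : v ≠ 0 := by rintro rfl; simp at hv
  have hw₂ : w₂ ∈ P ⊓ LinearMap.ker (polarBilin Q v) := hK ▸ subset_span (by simp)
  ext L
  constructor
  · rintro ⟨hL, hvL, hLP, hani⟩
    have hvL' := hvL (mem_span_singleton_self v)
    obtain ⟨c, rfl⟩ := exists_eq_span_pair_add_smul hv0 hK hw₁ (by simpa using hvw₁) hL hvL' hLP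
      fun hLv => not_isAnisotropicSubspace_of_le_ker_polar Q hv hL hvL' hLv hani
    exact ⟨c, hani, rfl⟩
  · rintro ⟨c, hani, rfl⟩
    refine ⟨finrank_span_pair_add_smul hv0 (f := polarBilin Q v)
      (polarBilin_self_eq_zero Q v) (by simpa using hvw₁) hw₂.2 c,
      span_mono (by simp), span_le.mpr ?_, hani⟩
    rintro x (rfl | rfl)
    exacts [(hK.ge (subset_span (by simp))).1, add_mem hw₁ (smul_mem _ _ hw₂.1)]

theorem ncard_setOf_isAnisotropicSubspace_span_pair_add_smul [Fintype F]
    (hF : Fintype.card F = 4) {v w₁ w₂ : V} (hv : Q v ≠ 0) (hQw₂ : Q w₂ = 0)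
    (hvw₁ : polar Q v w₁ = 1) (hvw₂ : polar Q v w₂ = 0) (hb : polar Q w₁ w₂ ≠ 0) :
    {c : F | IsAnisotropicSubspace Q (span F {v, w₁ + c • w₂})}.ncard = 2 := by
  have hQ : ∀ c : F, Q (w₁ + c • w₂) = Q w₁ + c * polar Q w₁ w₂ := fun c => by
    rw [add_comm, map_smul_add, hQw₂, polar_comm]
    ring
  have hvu : ∀ c : F, polar Q v (w₁ + c • w₂) = 1 := fun c => by simp [hvw₁, hvw₂]
  simp_rw [isAnisotropicSubspace_span_pair_iff Q hF hv (hvu _), hQ]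
  refine ncard_setOf_sq_ne_self_comp hF fun c c' h => ?_
  have : (c - c') * (Q v * polar Q w₁ w₂) = 0 := by linear_combination h
  exact sub_eq_zero.mp ((mul_eq_zero.mp this).resolve_right (mul_ne_zero hv hb))

theorem setOf_isAnisotropicSubspace_span_pair_add_smul_eq_empty [CharP F 2]
    (hQ : NoAnisotropicLineInTangentHyperplane Q) {v w₁ w₂ : V} (hv : v ≠ 0) (hw₂ : w₂ ≠ 0)
    (hQw₂ : Q w₂ = 0) (hvw₁ : polar Q v w₁ = 1) (hvw₂ : polar Q v w₂ = 0)
    (hb : polar Q w₁ w₂ = 0) :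
    {c : F | IsAnisotropicSubspace Q (span F {v, w₁ + c • w₂})} = ∅ := by
  refine Set.eq_empty_of_forall_notMem fun c hani => hQ w₂ hw₂ hQw₂ _
    (finrank_span_pair_add_smul hv (f := polarBilin Q v) (polarBilin_self_eq_zero Q v)
      (by simpa using hvw₁) (by simpa using hvw₂) c) ?_ hani
  rw [span_le]
  rintro x (rfl | rfl)
  · simpa [polar_comm Q w₂] using hvw₂
  · simpa [polar_comm Q w₂, hQw₂] using hb

theorem ncard_anisotropicPencil_eq_zero_or_two [Fintype F] [FiniteDimensional F V]
    (hF : Fintype.card F = 4) (hQ : NoAnisotropicLineInTangentHyperplane Q)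
    {p P : Submodule F V} (hp : finrank F p = 1) (hP : finrank F P = 3) (hpP : p ≤ P) :
    (anisotropicPencil Q p P).ncard = 0 ∨ (anisotropicPencil Q p P).ncard = 2 := by
  have := charP_two_of_card_eq_four hF
  obtain ⟨v, hvp, hv0⟩ := exists_mem_ne_zero_of_ne_bot (p := p) fun h => by
    rw [h, finrank_bot] at hp
    exact zero_ne_one hp
  obtain rfl := eq_span_singleton_of_mem_of_finrank_eq_one hp hvp hv0
  have hvP : v ∈ P := hpP hvp
  rcases eq_or_ne (Q v) 0 with hQv | hQv
  · left
    rw [Set.eq_empty_of_forall_notMem fun L (hL : L ∈ anisotropicPencil Q _ P) =>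
      hv0 (hL.2.2.2 v (hL.2.1 hvp) hQv), Set.ncard_empty]
  by_cases hPv : P ≤ LinearMap.ker (polarBilin Q v)
  · left
    rw [anisotropicPencil_eq_empty_of_le_ker_polar Q hQv hPv, Set.ncard_empty]
  obtain ⟨w₁, hw₁P, hvw₁⟩ : ∃ w₁ ∈ P, polar Q v w₁ = 1 := by
    obtain ⟨u, huP, hu⟩ := SetLike.not_le_iff_exists.mp hPv
    refine ⟨(polar Q v u)⁻¹ • u, smul_mem _ _ huP, ?_⟩
    simp only [LinearMap.mem_ker, polarBilin_apply_apply] at hu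
    simp [hu]
  obtain ⟨w₂, hK, hw₂v, hQw₂⟩ := exists_isotropic_eq_span_pair_of_le_ker_polar Q hQv
    (K := P ⊓ LinearMap.ker (polarBilin Q v)) (by have := finrank_inf_ker_add_one hPv; omega)
    ⟨hvP, polarBilin_self_eq_zero Q v⟩ inf_le_right
  have hvw₂ : polar Q v w₂ = 0 := by
    simpa using (hK.ge (subset_span (by simp)) : w₂ ∈ P ⊓ LinearMap.ker (polarBilin Q v)).2
  rw [anisotropicPencil_eq_image Q hQv hK hw₁P hvw₁, Set.ncard_image_of_injective _
    (injective_span_pair_add_smul (f := polarBilin Q v) (polarBilin_self_eq_zero Q v)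
      (by simpa using hvw₁) (by simpa using hvw₂) hw₂v)]
  rcases eq_or_ne (polar Q w₁ w₂) 0 with hb | hb
  · left
    rw [setOf_isAnisotropicSubspace_span_pair_add_smul_eq_empty Q hQ hv0
      (fun h : w₂ = 0 => hw₂v (h ▸ zero_mem _)) hQw₂ hvw₁ hvw₂ hb, Set.ncard_empty]
  · exact Or.inr
      (ncard_setOf_isAnisotropicSubspace_span_pair_add_smul Q hF hQv hQw₂ hvw₁ hvw₂ hb)

end QuadraticForm

theorem NoAnisotropicLineInTangentHyperplane.comp {F V W : Type*} [Field F] [AddCommGroup V]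
    [Module F V] [AddCommGroup W] [Module F W] {Q : QuadraticForm F W}
    (hQ : NoAnisotropicLineInTangentHyperplane Q) (e : V ≃ₗ[F] W) :
    NoAnisotropicLineInTangentHyperplane (Q.comp (e : V →ₗ[F] W)) := by
  intro w hw hQw L hL hLw hani
  refine hQ (e w) (by simpa using hw) hQw (L.map (e : V →ₗ[F] W))
    (by rwa [LinearEquiv.finrank_map_eq]) ?_ ?_
  · rintro _ ⟨x, hx, rfl⟩
    simpa [polar] using hLw hx
  · rintro _ ⟨x, hx, rfl⟩ hQx
    simp [hani x hx hQx]

section Hyperbolic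

variable (F : Type*) [Field F]

def hyperbolicForm : QuadraticForm F (Fin 4 → F) :=
  proj 0 1 + proj 2 3

variable {F}

@[simp]
theorem hyperbolicForm_apply (x : Fin 4 → F) : hyperbolicForm F x = x 0 * x 1 + x 2 * x 3 := by
  simp [hyperbolicForm, proj_apply]

theorem polar_hyperbolicForm (x y : Fin 4 → F) :
    polar (hyperbolicForm F) x y = x 0 * y 1 + x 1 * y 0 + x 2 * y 3 + x 3 * y 2 := by
  simp only [polar, hyperbolicForm_apply, Pi.add_apply]
  ring

theorem finrank_ker_polarBilin_hyperbolicForm {w : Fin 4 → F} (hw : w ≠ 0) :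
    finrank F (LinearMap.ker (polarBilin (hyperbolicForm F) w)) = 3 := by
  have hne : polarBilin (hyperbolicForm F) w ≠ 0 := fun h => hw <| by
    have key : ∀ y, polar (hyperbolicForm F) w y = 0 := fun y => by
      simpa using LinearMap.congr_fun h y
    ext i
    fin_cases i
    · simpa [polar_hyperbolicForm] using key (Pi.single 1 1)
    · simpa [polar_hyperbolicForm] using key (Pi.single 0 1)
    · simpa [polar_hyperbolicForm] using key (Pi.single 3 1)
    · simpa [polar_hyperbolicForm] using key (Pi.single 2 1)
  have := Module.Dual.finrank_ker_add_one_of_ne_zero hne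
  rw [Module.finrank_fin_fun] at this
  omega

theorem exists_singular_line_le_ker_polarBilin_hyperbolicForm {w : Fin 4 → F} (hw : w ≠ 0)
    (hQw : hyperbolicForm F w = 0) :
    ∃ M : Submodule F (Fin 4 → F), finrank F M = 2 ∧
      M ≤ LinearMap.ker (polarBilin (hyperbolicForm F) w) ∧ ∀ x ∈ M, hyperbolicForm F x = 0 := by
  rw [hyperbolicForm_apply] at hQw
  -- `{(s a, t b, t a, -s b)}` is a line of the quadric; it lies in `w^⊥` iff `(a, b)` solves a
  -- 2 × 2 linear system whose determinant is `-Q w = 0`.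
  obtain ⟨a, b, hab, h₁, h₂⟩ : ∃ a b : F, (a ≠ 0 ∨ b ≠ 0) ∧
      b * w 0 + a * w 3 = 0 ∧ a * w 1 - b * w 2 = 0 := by
    by_cases h : w 0 = 0 ∧ w 3 = 0
    · refine ⟨w 2, w 1, ?_, by linear_combination hQw, by ring⟩
      by_contra! h'
      exact hw (funext fun i => by fin_cases i <;> simp [h, h'])
    · exact ⟨w 0, -w 3, by rw [neg_ne_zero]; tauto, by ring, by linear_combination hQw⟩
  have hm₁ : (![a, 0, 0, -b] : Fin 4 → F) ≠ 0 := fun h => by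
    have h0 := congrFun h 0
    have h3 := congrFun h 3
    simp_all
  have hm₂ : (![0, b, a, 0] : Fin 4 → F) ∉ span F {![a, 0, 0, -b]} := fun h => by
    obtain ⟨t, ht⟩ := mem_span_singleton.mp h
    have h1 := congrFun ht 1
    have h2 := congrFun ht 2
    simp only [Fin.isValue, Pi.smul_apply, Matrix.cons_val_one, Matrix.cons_val_zero, smul_eq_mul,
      mul_zero, Matrix.cons_val] at h1 h2
    tauto
  refine ⟨_, finrank_span_pair_eq_two hm₁ hm₂, span_le.mpr ?_, fun x hx => ?_⟩
  · rintro x (rfl | rfl) <;>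
      simp only [SetLike.mem_coe, LinearMap.mem_ker, polarBilin_apply_apply, polar_hyperbolicForm,
        Fin.isValue, Matrix.cons_val_one, Matrix.cons_val_zero, Matrix.cons_val, mul_zero, mul_neg,
        zero_add, add_zero]
    · linear_combination h₂
    · linear_combination h₁
  · obtain ⟨s, t, rfl⟩ := mem_span_pair.mp hx
    simp only [hyperbolicForm_apply, Pi.add_apply, Pi.smul_apply, smul_eq_mul, Fin.isValue,
      Matrix.cons_val_zero, Matrix.cons_val_one, Matrix.cons_val]
    ring

theorem noAnisotropicLineInTangentHyperplane_hyperbolicForm :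
    NoAnisotropicLineInTangentHyperplane (hyperbolicForm F) := by
  intro w hw hQw L hL hLw hani
  obtain ⟨M, hM, hMw, hMQ⟩ := exists_singular_line_le_ker_polarBilin_hyperbolicForm hw hQw
  have hsum := finrank_sup_add_finrank_inf_eq L M
  have hle := finrank_mono (sup_le hLw hMw)
  rw [finrank_ker_polarBilin_hyperbolicForm hw] at hle
  obtain ⟨x, ⟨hxL, hxM⟩, hx0⟩ := exists_mem_ne_zero_of_ne_bot (p := L ⊓ M) fun h => by
    rw [h, finrank_bot] at hsum
    omega
  exact hx0 (hani x hxL (hMQ x hxM))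

end Hyperbolic

theorem forall_isPoint_not_onQuadric_iff {F : Type} [Field F] (Q : QuadraticForm F (Vv F))
    (L : Submodule F (Vv F)) :
    (∀ q : Submodule F (Vv F), IsPoint F q → q ≤ L → ¬ OnQuadric F Q q) ↔
      IsAnisotropicSubspace Q L := by
  constructor
  · intro h x hxL hQx
    by_contra hx0
    refine h (span F {x}) (finrank_span_singleton hx0) (span_le.mpr (by simpa using hxL)) ?_
    intro y hy
    obtain ⟨a, rfl⟩ := mem_span_singleton.mp hy
    simp [Q.map_smul, hQx]
  · intro hani q hq hqL hOn
    obtain ⟨x, hxq, hx0⟩ := exists_mem_ne_zero_of_ne_bot (p := q) fun h => by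
      rw [IsPoint, h, finrank_bot] at hq
      exact zero_ne_one hq
    exact hx0 (hani x (hqL hxq) (hOn x hxq))

end HyperbolicPencil

open HyperbolicPencil

/-- Let `O` be the set of lines of `PG(3,4)` disjoint from a hyperbolic quadric `H`.
For every incident point-plane pair `(p,P)`, the pencil of lines through `p` inside
`P` contains either 0 or exactly 2 lines of `O`. -/
theorem stmt7 (F : Type) [Field F] [Fintype F] (hF : Fintype.card F = 4)
    (Q : Vv F → F) (hQ : IsHyperbolicForm F Q)
    (p P : Submodule F (Vv F)) (hp : IsPoint F p) (hP : IsPlane F P) (hpP : p ≤ P) :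
    {L : Submodule F (Vv F) | IsLine F L ∧ p ≤ L ∧ L ≤ P ∧
        ∀ q : Submodule F (Vv F), IsPoint F q → q ≤ L → ¬ OnQuadric F Q q}.ncard = 0 ∨
    {L : Submodule F (Vv F) | IsLine F L ∧ p ≤ L ∧ L ≤ P ∧
        ∀ q : Submodule F (Vv F), IsPoint F q → q ≤ L → ¬ OnQuadric F Q q}.ncard
      = 2 := by
  obtain ⟨e, he⟩ := hQ
  obtain rfl : Q = (hyperbolicForm F).comp (e : Vv F →ₗ[F] Vv F) := funext fun x => by simp [he]
  simp only [IsLine, forall_isPoint_not_onQuadric_iff]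
  exact ncard_anisotropicPencil_eq_zero_or_two _ hF
    (noAnisotropicLineInTangentHyperplane_hyperbolicForm.comp e) hp hP hpP
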